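/- Let α be irrational, and suppose p ∈ ℕ, p > 0, satisfies d([pα], [0]) < ε in ℝ/ℤ for some ε > 0. Then the set { [k p α] : k ∈ ℕ } is ε-dense in ℝ/ℤ: every point of ℝ/ℤ is within distance ε of some [k p α]. -/

import Mathlib

/-!
Lift `[pα]` to its representative `r ∈ [-1/2, 1/2]`, so `|r| = d([pα], [0]) < ε`, and `r ≠ 0` by
irrationality. Replacing `y` and `r` by their negatives if necessary, `r > 0`; lift `y` to `t ∈ [0, 1)`.
The numbers `k r` step through `[0, ∞)` with gaps `r`, so some `k r` lies in `(t - r, t]`.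
-/

theorem exists_nat_sub_mul_mem_Ico {r t : ℝ} (hr : 0 < r) (ht : 0 ≤ t) :
    ∃ k : ℕ, t - k * r ∈ Set.Ico 0 r := by
  refine ⟨⌊t / r⌋₊, ?_, ?_⟩
  · have := Nat.floor_le (div_nonneg ht hr.le)
    rw [le_div_iff₀ hr] at this
    linarith
  · have := Nat.lt_floor_add_one (t / r)
    rw [div_lt_iff₀ hr] at this
    linarith

namespace AddCircle

theorem exists_coe_eq_and_abs_eq_norm (T : ℝ) (a : AddCircle T) :
    ∃ r : ℝ, (r : AddCircle T) = a ∧ |r| = ‖a‖ := by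
  obtain ⟨x, rfl⟩ := QuotientAddGroup.mk_surjective a
  refine ⟨x - round (T⁻¹ * x) * T, ?_, (norm_eq T).symm⟩
  rw [coe_sub, sub_eq_self, coe_eq_zero_iff]
  exact ⟨round (T⁻¹ * x), zsmul_eq_mul _ _⟩

theorem exists_dist_nsmul_lt_norm {T : ℝ} [Fact (0 < T)] {a : AddCircle T} (ha : a ≠ 0)
    (y : AddCircle T) : ∃ k : ℕ, dist y (k • a) < ‖a‖ := by
  obtain ⟨r, rfl, hr⟩ := exists_coe_eq_and_abs_eq_norm T a
  have hr0 : r ≠ 0 := by rintro rfl; exact ha rfl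
  rw [← hr]
  clear ha hr
  wlog hpos : 0 < r generalizing r y
  · obtain ⟨k, hk⟩ := this (-y) (-r) (neg_ne_zero.mpr hr0)
      (neg_pos.mpr (lt_of_le_of_ne (not_lt.mp hpos) hr0))
    refine ⟨k, ?_⟩
    rwa [coe_neg, smul_neg, dist_neg_neg, abs_neg] at hk
  set t : ℝ := (equivIco T 0 y : ℝ)
  obtain ⟨ht0, -⟩ : t ∈ Set.Ico 0 (0 + T) := (equivIco T 0 y).2
  obtain ⟨k, hk0, hk⟩ := exists_nat_sub_mul_mem_Ico hpos ht0
  refine ⟨k, ?_⟩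
  calc dist y (k • (r : AddCircle T)) = ‖((t - k * r : ℝ) : AddCircle T)‖ := by
        rw [dist_eq_norm, coe_sub, ← nsmul_eq_mul, coe_nsmul, coe_equivIco]
    _ ≤ |t - k * r| := QuotientAddGroup.norm_mk_le_norm
    _ < |r| := by rw [abs_of_pos hpos]; exact abs_lt.mpr ⟨by linarith, hk⟩

end AddCircle

theorem multiples_eps_dense_general (α : ℝ) (hα : Irrational α) (p : ℕ) (hp : 0 < p)
    (ε : ℝ)
    (h : dist (((p * α : ℝ)) : AddCircle (1 : ℝ)) (0 : AddCircle (1 : ℝ)) < ε) :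
    ∀ y : AddCircle (1 : ℝ), ∃ k : ℕ,
      dist y (((k * p * α : ℝ)) : AddCircle (1 : ℝ)) ≤ ε := by
  intro y
  have hne : ((p * α : ℝ) : AddCircle (1 : ℝ)) ≠ 0 := by
    rw [Ne, AddCircle.coe_eq_zero_iff]
    rintro ⟨n, hn⟩
    exact (hα.natCast_mul hp.ne').ne_int n (by simpa using hn.symm)
  obtain ⟨k, hk⟩ := AddCircle.exists_dist_nsmul_lt_norm hne y
  refine ⟨k, ?_⟩
  rw [dist_zero_right] at h
  rw [mul_assoc, ← nsmul_eq_mul, AddCircle.coe_nsmul]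
  exact (hk.trans h).le

theorem multiples_eps_dense (α : ℝ) (hα : Irrational α) (p : ℕ) (hp : 0 < p)
    (ε : ℝ) (hε : 0 < ε)
    (h : dist (((p * α : ℝ)) : AddCircle (1 : ℝ)) (0 : AddCircle (1 : ℝ)) < ε) :
    ∀ y : AddCircle (1 : ℝ), ∃ k : ℕ,
      dist y (((k * p * α : ℝ)) : AddCircle (1 : ℝ)) ≤ ε :=
  multiples_eps_dense_general α hα p hp ε h
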